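/- arXiv:2512.13373 — 5 statements merged into one kernel-verified Lean document; each statement's English description precedes it below -/
import Mathlib

section
/- Let H₀ = p_r²/2 + p_θ²/(2r²) + p_θ in symplectic polar coordinates on T*ℝ² and let V : ℝ² → ℝ be smooth and nonnegative with constants a, R₁ > 0 such that in polar coordinates V(r,θ) ≤ a/r and ∂ᵣV(r,θ) + (2/r)V(r,θ) ≥ 0 for all r > R₁. Set H := H₀ − V. Then there is no point x = (r,θ,p_r,p_θ) with r ≥ R₁ satisfying simultaneously {H,r}(x) = 0, {H,{H,r}}(x) ≤ 0, and H(x) − p_θ > 0. Equivalently: for x with r ≥ R₁ one has {H,r}(x) = p_r and, if p_r = 0, then {H,{H,r}}(x) = p_θ²/r³ + ∂ᵣV(r,θ) ≥ (2/r)(H(x) − p_θ), so {H,{H,r}}(x) > 0 whenever H(x) − p_θ > 0. -/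
open Real Set

noncomputable section

/-- The phase space `T*ℝ² = ℝ² × ℝ²` with coordinates `((q₁,q₂),(p₁,p₂))`. -/
abbrev Phase : Type := (ℝ × ℝ) × (ℝ × ℝ)

/-- The magnetic Hamiltonian `H₀(q,p) = ½(p₁²+p₂²) + p₁q₂ − p₂q₁`. -/
def H0 (x : Phase) : ℝ :=
  (x.2.1 ^ 2 + x.2.2 ^ 2) / 2 + x.2.1 * x.1.2 - x.2.2 * x.1.1

/-- The Hamiltonian vector field of `H` given by Hamilton's equations
`q̇ = ∂H/∂p`, `ṗ = −∂H/∂q`. -/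
def XH (H : Phase → ℝ) (x : Phase) : Phase :=
  ((fderiv ℝ H x (((0, 0), (1, 0)) : Phase), fderiv ℝ H x (((0, 0), (0, 1)) : Phase)),
   (-(fderiv ℝ H x (((1, 0), (0, 0)) : Phase)), -(fderiv ℝ H x (((0, 1), (0, 0)) : Phase))))

/-- A function on the `q`-plane in polar coordinates: `pol V r θ = V (r cos θ, r sin θ)`. -/
def pol (V : ℝ × ℝ → ℝ) (r θ : ℝ) : ℝ := V (r * Real.cos θ, r * Real.sin θ)

/-- The radial derivative `∂ᵣV(r,θ)` in polar coordinates. -/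
def polR (V : ℝ × ℝ → ℝ) (r θ : ℝ) : ℝ := deriv (fun s => pol V s θ) r

/-- The angular derivative `∂_θV(r,θ)` in polar coordinates. -/
def polTheta (V : ℝ × ℝ → ℝ) (r θ : ℝ) : ℝ := deriv (fun φ => pol V r φ) θ

/-- `H₀` in symplectic polar coordinates: `p_r²/2 + p_θ²/(2r²) + p_θ`. -/
def H0pol (r pr pθ : ℝ) : ℝ := pr ^ 2 / 2 + pθ ^ 2 / (2 * r ^ 2) + pθ

/-- A chord of energy `c` for `H` from the fiber over `q₀` to the fiber over `q₁`:
`v` solves `v' = η X_H(v)` on `[0,1]`, lies in `H⁻¹(c)`, and has the prescribed endpoints. -/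
def IsChord (H : Phase → ℝ) (c : ℝ) (q₀ q₁ : ℝ × ℝ) (v : ℝ → Phase) (η : ℝ) : Prop :=
  (∀ t ∈ Icc (0:ℝ) 1, HasDerivAt v (η • XH H (v t)) t) ∧
  (∀ t ∈ Icc (0:ℝ) 1, H (v t) = c) ∧
  (v 0).1 = q₀ ∧ (v 1).1 = q₁

/-- The action `∫₀¹ λ(∂ₜv) dt = ∫₀¹ p(t)·q̇(t) dt` of a path in `T*ℝ²`. -/
def action (v : ℝ → Phase) : ℝ :=
  ∫ t in (0:ℝ)..1, ((v t).2.1 * (deriv v t).1.1 + (v t).2.2 * (deriv v t).1.2)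

/-- The critical points of the Rabinowitz action functional `𝒜^G_{q₀,q₁}`: pairs `(v,η)`
with `v' = η X_G(v)`, `G∘v = 0`, and endpoints in the fibers over `q₀` and `q₁`. -/
def RabCrit (G : Phase → ℝ) (q₀ q₁ : ℝ × ℝ) : Set ((ℝ → Phase) × ℝ) :=
  {w | (∀ t ∈ Icc (0:ℝ) 1, HasDerivAt w.1 (w.2 • XH G (w.1 t)) t) ∧
       (∀ t ∈ Icc (0:ℝ) 1, G (w.1 t) = 0) ∧
       (w.1 0).1 = q₀ ∧ (w.1 1).1 = q₁}

/-- `Crit⁺`: critical points of positive action. -/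
def RabCritPos (G : Phase → ℝ) (q₀ q₁ : ℝ × ℝ) : Set ((ℝ → Phase) × ℝ) :=
  {w | w ∈ RabCrit G q₀ q₁ ∧ 0 < action w.1}

/-- The perturbation class `𝓗`: smooth `h` with `dh` compactly supported, `h > 0`, and
`h − p·∂ₚh > 0`. -/
def memH (h : Phase → ℝ) : Prop :=
  ContDiff ℝ (⊤ : ℕ∞) h ∧ HasCompactSupport (fun x => fderiv ℝ h x) ∧
  (∀ x, 0 < h x) ∧ ∀ x : Phase, 0 < h x - fderiv ℝ h x ((((0, 0) : ℝ × ℝ), x.2) : Phase)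

/-- The compactly supported cut-off potential `χ₀·χ₁·V`, where
`χ₀(q,p) = χ((|q|−R₁)/(R₂−R₁))` and `χ₁ = χ(H₀ − sup V − c)`. -/
def pert (V : ℝ × ℝ → ℝ) (χ : ℝ → ℝ) (R₁ R₂ c : ℝ) (x : Phase) : ℝ :=
  χ ((‖x.1‖ - R₁) / (R₂ - R₁)) * χ (H0 x - (⨆ q, V q) - c) * V x.1

/-- The three-body potential with mass parameter `μ` in polar coordinates. -/
def V3 (μ r θ : ℝ) : ℝ :=
  (1 - μ) / Real.sqrt (r ^ 2 + 2 * r * μ * Real.cos θ + μ ^ 2) +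
    μ / Real.sqrt (r ^ 2 - 2 * r * (1 - μ) * Real.cos θ + (1 - μ) ^ 2)

/-- Lemma 2: for `H = H₀ − V` there is no point with `r ≥ R₁`,
`{H,r} = p_r = 0`, `{H,{H,r}} = p_θ²/r³ + ∂ᵣV ≤ 0` and `H − p_θ > 0`; indeed at points
with `r ≥ R₁` and `p_r = 0` one has `p_θ²/r³ + ∂ᵣV ≥ (2/r)(H − p_θ)`, which is positive
whenever `H − p_θ > 0`. -/
theorem no_max_outside
    (V : ℝ × ℝ → ℝ) (a R₁ : ℝ)
    (hV : ContDiff ℝ (⊤ : ℕ∞) V) (hVnn : ∀ q, 0 ≤ V q)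
    (ha : 0 < a) (hR₁ : 0 < R₁)
    (hbound : ∀ r θ : ℝ, R₁ < r → pol V r θ ≤ a / r)
    (hrad : ∀ r θ : ℝ, R₁ < r → 0 ≤ polR V r θ + (2 / r) * pol V r θ) :
    ∀ r θ pr pθ : ℝ, R₁ ≤ r → pr = 0 →
      (2 / r) * ((H0pol r pr pθ - pol V r θ) - pθ) ≤ pθ ^ 2 / r ^ 3 + polR V r θ ∧
      (0 < (H0pol r pr pθ - pol V r θ) - pθ → 0 < pθ ^ 2 / r ^ 3 + polR V r θ) := by
  
  intro r θ pr pθ hr hpr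
  have hr0 : 0 < r := lt_of_lt_of_le hR₁ hr
  have hrad' : 0 ≤ polR V r θ + (2 / r) * pol V r θ := by
    rcases lt_or_eq_of_le hr with h | h
    · exact hrad r θ h
    · subst h
      have hcd : ContDiff ℝ (⊤ : ℕ∞) (fun s : ℝ => pol V s θ) := by
        apply hV.comp
        exact ContDiff.prodMk (contDiff_id.mul contDiff_const) (contDiff_id.mul contDiff_const)
      have hca : ContinuousAt (fun s : ℝ => polR V s θ + (2 / s) * pol V s θ) R₁ := by
        have h1 : Continuous fun s : ℝ => polR V s θ := hcd.continuous_deriv (by simp)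
        have h3 : ContinuousAt (fun s : ℝ => 2 / s) R₁ :=
          ContinuousAt.div continuousAt_const continuousAt_id (ne_of_gt hR₁)
        exact h1.continuousAt.add (h3.mul hcd.continuous.continuousAt)
      have hne : (nhdsWithin R₁ (Set.Ioi R₁)).NeBot := nhdsGT_neBot R₁
      refine ge_of_tendsto (x := nhdsWithin R₁ (Set.Ioi R₁))
        (hca.tendsto.mono_left nhdsWithin_le_nhds) ?_
      filter_upwards [self_mem_nhdsWithin] with s hs
      exact hrad s θ hs
  have key : (2 / r) * ((H0pol r pr pθ - pol V r θ) - pθ)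
      = pθ ^ 2 / r ^ 3 - (2 / r) * pol V r θ := by
    subst hpr
    unfold H0pol
    field_simp
    ring
  constructor
  · rw [key]; linarith
  · intro hpos
    have h2r : 0 < 2 / r := by positivity
    have hh := mul_pos h2r hpos
    calc (0:ℝ) < (2 / r) * ((H0pol r pr pθ - pol V r θ) - pθ) := hh
      _ ≤ pθ ^ 2 / r ^ 3 + polR V r θ := by rw [key]; linarith
end
end

section
/- Let H₀ = p_r²/2 + p_θ²/(2r²) + p_θ in symplectic polar coordinates on T*ℝ² and let V : ℝ² → ℝ be smooth and nonnegative with constants a, R₁ > 0 such that V(r,θ) ≤ a/r and ∂ᵣV(r,θ) + (2/r)V(r,θ) ≥ 0 for all r > R₁. Fix positive constants c, e > 0, set R₂ := R₁ + 2a/e, let χ : ℝ → [0,1] be smooth and nonincreasing with χ' ≥ −2, χ = 1 on (−∞,0] and χ = 0 on [1,∞), χ₀(r) := χ((r−R₁)/(R₂−R₁)), and H₁ := H₀ − χ₀V on the region {H₀ ≤ sup V + c}. Then for every point x = (r,θ,p_r,p_θ) with r ≥ R₁, H₀(x) ≤ sup V + c, p_r = 0, and H₁(x) − p_θ ≥ e,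 one has p_θ²/r³ + χ₀(r)∂ᵣV(r,θ) + χ₀'(r)V(r,θ) ≥ e/r > 0. In particular there is no point with r ≥ R₁ at which simultaneously {H₁,r} = 0, {H₁,{H₁,r}} ≤ 0, and H₁ − p_θ ≥ e. -/
open Real Set

noncomputable section

lemma antitone_deriv_nonpos_aux {f : ℝ → ℝ} (hf : Antitone f) {x : ℝ}
    (hd : DifferentiableAt ℝ f x) : deriv f x ≤ 0 := by
  have h := hasDerivAt_iff_tendsto_slope.mp hd.hasDerivAt
  have h' : Filter.Tendsto (slope f x) (nhdsWithin x (Set.Ioi x)) (nhds (deriv f x)) :=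
    h.mono_left (nhdsWithin_mono x (fun y hy => ne_of_gt hy))
  refine le_of_tendsto h' (Filter.eventually_of_mem self_mem_nhdsWithin (fun y hy => ?_))
  have hy' : x < y := hy
  have : slope f x y = (f y - f x) / (y - x) := by
    simp [slope, div_eq_inv_mul]
  rw [this]
  exact div_nonpos_of_nonpos_of_nonneg (by linarith [hf hy'.le]) (by linarith)

/-- Lemma 5: with `R₂ = R₁ + 2a/e`, at points with `r ≥ R₁`,
`H₀ ≤ sup V + c`, `p_r = 0` and `H₁ − p_θ ≥ e`, one has
`{H₁,{H₁,r}} = p_θ²/r³ + χ₀∂ᵣV + χ₀'V ≥ e/r > 0`; in particular no such point satisfies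
simultaneously `{H₁,r} = 0`, `{H₁,{H₁,r}} ≤ 0` and `H₁ − p_θ ≥ e`. -/
theorem emptySet_lemma
    (V : ℝ × ℝ → ℝ) (a R₁ c e R₂ : ℝ)
    (hV : ContDiff ℝ (⊤ : ℕ∞) V) (hVnn : ∀ q, 0 ≤ V q)
    (ha : 0 < a) (hR₁ : 0 < R₁)
    (hbound : ∀ r θ : ℝ, R₁ < r → pol V r θ ≤ a / r)
    (hrad : ∀ r θ : ℝ, R₁ < r → 0 ≤ polR V r θ + (2 / r) * pol V r θ)
    (hc : 0 < c) (he : 0 < e) (hR₂ : R₂ = R₁ + 2 * a / e)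
    (χ : ℝ → ℝ)
    (hχ : ContDiff ℝ (⊤ : ℕ∞) χ) (hχ01 : ∀ x, χ x ∈ Icc (0:ℝ) 1) (hχanti : Antitone χ)
    (hχ' : ∀ x, -2 ≤ deriv χ x)
    (hχleft : ∀ x : ℝ, x ≤ 0 → χ x = 1) (hχright : ∀ x : ℝ, 1 ≤ x → χ x = 0) :
    ∀ r θ pr pθ : ℝ, R₁ ≤ r → H0pol r pr pθ ≤ (⨆ q, V q) + c → pr = 0 →
      e ≤ (H0pol r pr pθ - χ ((r - R₁) / (R₂ - R₁)) * pol V r θ) - pθ →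
        e / r ≤ pθ ^ 2 / r ^ 3 + χ ((r - R₁) / (R₂ - R₁)) * polR V r θ +
            deriv (fun s => χ ((s - R₁) / (R₂ - R₁))) r * pol V r θ ∧
        0 < e / r := by
  intro r θ pr pθ hrR₁ hH0 hpr hH1
  subst hpr
  have hr : 0 < r := lt_of_lt_of_le hR₁ hrR₁
  have hden : R₂ - R₁ = 2 * a / e := by rw [hR₂]; ring
  have hdenpos : 0 < R₂ - R₁ := by rw [hden]; positivity
  -- smoothness of `pol` in the radial variable
  have hpolsm : ContDiff ℝ (⊤ : ℕ∞) (fun s => pol V s θ) := by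
    have hcurve : ContDiff ℝ (⊤ : ℕ∞) (fun s : ℝ => (s * Real.cos θ, s * Real.sin θ)) :=
      ContDiff.prodMk (contDiff_id.mul contDiff_const) (contDiff_id.mul contDiff_const)
    exact hV.comp hcurve
  have hpolC : Continuous (fun s => pol V s θ) := hpolsm.continuous
  have hpolRC : Continuous (fun s => polR V s θ) := by
    have := hpolsm.continuous_deriv (by simp)
    simpa [polR] using this
  -- extend the bounds to `r ≥ R₁` by continuity
  have hbound' : pol V r θ ≤ a / r := by
    have h1 : Filter.Tendsto (fun s => pol V s θ) (nhdsWithin r (Set.Ioi r))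
        (nhds (pol V r θ)) := (hpolC.tendsto r).mono_left nhdsWithin_le_nhds
    have h2 : Filter.Tendsto (fun s : ℝ => a / s) (nhdsWithin r (Set.Ioi r))
        (nhds (a / r)) :=
      (Filter.Tendsto.div tendsto_const_nhds (continuous_id.tendsto r)
        hr.ne').mono_left nhdsWithin_le_nhds
    exact le_of_tendsto_of_tendsto h1 h2 (Filter.eventually_of_mem self_mem_nhdsWithin
      (fun s hs => hbound s θ (lt_of_le_of_lt hrR₁ hs)))
  have hrad' : 0 ≤ polR V r θ + (2 / r) * pol V r θ := by
    have h1 : Filter.Tendsto (fun s => polR V s θ + (2 / s) * pol V s θ)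
        (nhdsWithin r (Set.Ioi r)) (nhds (polR V r θ + (2 / r) * pol V r θ)) :=
      ((hpolRC.tendsto r).add
        ((Filter.Tendsto.div tendsto_const_nhds (continuous_id.tendsto r)
          hr.ne').mul (hpolC.tendsto r))).mono_left nhdsWithin_le_nhds
    exact ge_of_tendsto h1 (Filter.eventually_of_mem self_mem_nhdsWithin
      (fun s hs => hrad s θ (lt_of_le_of_lt hrR₁ hs)))
  set u := (r - R₁) / (R₂ - R₁) with hu
  set P := pol V r θ with hP
  set Pr := polR V r θ with hPr
  -- derivative of the cutoff
  have hχd : HasDerivAt (fun s => χ ((s - R₁) / (R₂ - R₁)))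
      (deriv χ u * (1 / (R₂ - R₁))) r := by
    have h1 : HasDerivAt (fun s : ℝ => (s - R₁) / (R₂ - R₁)) (1 / (R₂ - R₁)) r := by
      simpa using ((hasDerivAt_id r).sub_const R₁).div_const (R₂ - R₁)
    exact ((hχ.differentiable (by simp) u).hasDerivAt).comp r h1
  have hDeq : deriv (fun s => χ ((s - R₁) / (R₂ - R₁))) r
      = deriv χ u * (1 / (R₂ - R₁)) := hχd.deriv
  have hχu0 : 0 ≤ χ u := (hχ01 u).1
  have hdχle : deriv χ u ≤ 0 := antitone_deriv_nonpos_aux hχanti (hχ.differentiable (by simp) u)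
  have hdχge : -2 ≤ deriv χ u := hχ' u
  have hP0 : 0 ≤ P := hVnn _
  -- key bound coming from `H₁ - pθ ≥ e`
  have hkey : e + χ u * P ≤ pθ ^ 2 / (2 * r ^ 2) := by
    have hH0pol : H0pol r 0 pθ = pθ ^ 2 / (2 * r ^ 2) + pθ := by
      simp [H0pol]
    rw [hH0pol] at hH1
    linarith
  have hA : (e + χ u * P) * (2 * r ^ 2) ≤ pθ ^ 2 :=
    (le_div_iff₀ (by positivity : (0:ℝ) < 2 * r ^ 2)).mp hkey
  have hC : P * r ≤ a := (le_div_iff₀ hr).mp hbound'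
  have hB : 0 ≤ Pr * r + 2 * P := by
    have h0 := mul_nonneg hrad' hr.le
    have h1 : (Pr + (2 / r) * P) * r = Pr * r + 2 * P := by
      field_simp
    linarith [h1 ▸ h0]
  have hT2 : 0 ≤ χ u * (Pr * r + 2 * P) * r ^ 2 :=
    mul_nonneg (mul_nonneg hχu0 hB) (by positivity)
  have hT3 : 0 ≤ (deriv χ u + 2) * (P * r ^ 3) :=
    mul_nonneg (by linarith) (mul_nonneg hP0 (by positivity))
  have hT4 : 0 ≤ (a - P * r) * r ^ 2 := mul_nonneg (by linarith) (by positivity)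
  have hnum : 0 ≤ 2 * a * pθ ^ 2 + 2 * a * (χ u * Pr) * r ^ 3
      + e * deriv χ u * P * r ^ 3 - 2 * a * e * r ^ 2 := by
    nlinarith [hA, hT2, hT3, hT4, mul_nonneg he.le hT3, mul_nonneg he.le hT4,
      mul_nonneg ha.le hT2]
  constructor
  · rw [hDeq, hden]
    have hsub : pθ ^ 2 / r ^ 3 + χ u * Pr + deriv χ u * (1 / (2 * a / e)) * P - e / r
        = (2 * a * pθ ^ 2 + 2 * a * (χ u * Pr) * r ^ 3
            + e * deriv χ u * P * r ^ 3 - 2 * a * e * r ^ 2) / (2 * a * r ^ 3) := by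
      field_simp
    have hq := div_nonneg hnum (by positivity : (0:ℝ) ≤ 2 * a * r ^ 3)
    rw [← hsub] at hq
    linarith
  · positivity
end
end

section
/- Let H₀ = p_r²/2 + p_θ²/(2r²) + p_θ in symplectic polar coordinates on T*ℝ² and let V : ℝ² → ℝ be smooth and nonnegative with constants a, R₁ > 0 such that V(r,θ) ≤ a/r and ∂ᵣV(r,θ) + (2/r)V(r,θ) ≥ 0 for all r > R₁. Fix c > 0 and R₂ > R₁, let χ : ℝ → [0,1] be smooth and nonincreasing with χ' ≥ −2, χ = 1 on (−∞,0] and χ = 0 on [1,∞), χ₀(r) := χ((r−R₁)/(R₂−R₁)), and H₁ := H₀ − χ₀V on the region {H₀ ≤ sup V + c}. Then for every point x = (r,θ,p_r,p_θ) with r ≥ R₁, H₀(x) ≤ sup V + c, and p_r = 0, one has p_θ²/r³ + χ₀(r)∂ᵣV(r,θ) + χ₀'(r)V(r,θ) ≥ (2/r)( H₁(x) − p_θ − a/(R₂−R₁) ). -/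
open Real Set

noncomputable section

/-- inequality (12): at points with `r ≥ R₁`, `H₀ ≤ sup V + c` and
`p_r = 0` one has
`p_θ²/r³ + χ₀∂ᵣV + χ₀'V ≥ (2/r)(H₁ − p_θ − a/(R₂−R₁))`. -/
theorem bracket_lower_bound
    (V : ℝ × ℝ → ℝ) (a R₁ c R₂ : ℝ)
    (hV : ContDiff ℝ (⊤ : ℕ∞) V) (hVnn : ∀ q, 0 ≤ V q)
    (ha : 0 < a) (hR₁ : 0 < R₁)
    (hbound : ∀ r θ : ℝ, R₁ < r → pol V r θ ≤ a / r)
    (hrad : ∀ r θ : ℝ, R₁ < r → 0 ≤ polR V r θ + (2 / r) * pol V r θ)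
    (hc : 0 < c) (hR₂ : R₁ < R₂)
    (χ : ℝ → ℝ)
    (hχ : ContDiff ℝ (⊤ : ℕ∞) χ) (hχ01 : ∀ x, χ x ∈ Icc (0:ℝ) 1) (hχanti : Antitone χ)
    (hχ' : ∀ x, -2 ≤ deriv χ x)
    (hχleft : ∀ x : ℝ, x ≤ 0 → χ x = 1) (hχright : ∀ x : ℝ, 1 ≤ x → χ x = 0) :
    ∀ r θ pr pθ : ℝ, R₁ ≤ r → H0pol r pr pθ ≤ (⨆ q, V q) + c → pr = 0 →
      (2 / r) * ((H0pol r pr pθ - χ ((r - R₁) / (R₂ - R₁)) * pol V r θ) - pθ - a / (R₂ - R₁)) ≤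
        pθ ^ 2 / r ^ 3 + χ ((r - R₁) / (R₂ - R₁)) * polR V r θ +
          deriv (fun s => χ ((s - R₁) / (R₂ - R₁))) r * pol V r θ := by
  intro r θ pr pθ hrR₁ _hE hpr
  subst hpr
  have hdpos : (0:ℝ) < R₂ - R₁ := sub_pos.mpr hR₂
  have hrpos : 0 < r := lt_of_lt_of_le hR₁ hrR₁
  have hrne : r ≠ 0 := ne_of_gt hrpos
  -- smoothness of the radial slice
  have hpolC : ContDiff ℝ (⊤ : ℕ∞) (fun s : ℝ => pol V s θ) := by
    have : ContDiff ℝ (⊤ : ℕ∞) (fun s : ℝ => (s * Real.cos θ, s * Real.sin θ)) :=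
      (ContDiff.prodMk (contDiff_id.mul contDiff_const) (contDiff_id.mul contDiff_const))
    exact hV.comp this
  -- continuity of polR in r
  have hpolRcont : Continuous (fun s : ℝ => polR V s θ) := by
    have := hpolC.continuous_deriv (by simp)
    simpa [polR] using this
  have hpolcont : Continuous (fun s : ℝ => pol V s θ) := hpolC.continuous
  -- extend hbound, hrad to r ≥ R₁ by continuity from the right
  have hbound' : pol V r θ ≤ a / r := by
    rcases eq_or_lt_of_le hrR₁ with h | h
    · have h1 : Filter.Tendsto (fun s : ℝ => pol V s θ) (nhdsWithin r (Set.Ioi r))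
          (nhds (pol V r θ)) := (hpolcont.tendsto r).mono_left nhdsWithin_le_nhds
      have h2 : Filter.Tendsto (fun s : ℝ => a / s) (nhdsWithin r (Set.Ioi r))
          (nhds (a / r)) :=
        ((continuousAt_const.div continuousAt_id hrne).tendsto.mono_left
          nhdsWithin_le_nhds)
      refine le_of_tendsto_of_tendsto h1 h2 ?_
      filter_upwards [self_mem_nhdsWithin] with s hs
      exact hbound s θ (h ▸ hs)
    · exact hbound r θ h
  have hrad' : 0 ≤ polR V r θ + (2 / r) * pol V r θ := by
    rcases eq_or_lt_of_le hrR₁ with h | h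
    · have h1 : Filter.Tendsto (fun s : ℝ => polR V s θ + (2 / s) * pol V s θ)
          (nhdsWithin r (Set.Ioi r)) (nhds (polR V r θ + (2 / r) * pol V r θ)) := by
        have hca : ContinuousAt (fun s : ℝ => polR V s θ + (2 / s) * pol V s θ) r :=
          (hpolRcont.continuousAt).add
            ((continuousAt_const.div continuousAt_id hrne).mul hpolcont.continuousAt)
        exact hca.tendsto.mono_left nhdsWithin_le_nhds
      refine ge_of_tendsto h1 ?_
      filter_upwards [self_mem_nhdsWithin] with s hs
      exact hrad s θ (h ▸ hs)
    · exact hrad r θ h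
  -- chain rule for χ₀
  have hderiv : deriv (fun s => χ ((s - R₁) / (R₂ - R₁))) r
      = deriv χ ((r - R₁) / (R₂ - R₁)) * (1 / (R₂ - R₁)) := by
    have h1 : HasDerivAt (fun s : ℝ => (s - R₁) / (R₂ - R₁)) (1 / (R₂ - R₁)) r := by
      simpa using ((hasDerivAt_id r).sub_const R₁).div_const (R₂ - R₁)
    have h2 : HasDerivAt χ (deriv χ ((r - R₁) / (R₂ - R₁))) ((r - R₁) / (R₂ - R₁)) :=
      ((hχ.differentiable (by simp)) _).hasDerivAt
    exact (h2.comp r h1).deriv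
  rw [hderiv]
  set u := (r - R₁) / (R₂ - R₁) with hu
  set P := pol V r θ with hP
  set PR := polR V r θ with hPR
  have hPnn : 0 ≤ P := hVnn _
  have hχ₀ : 0 ≤ χ u := (hχ01 u).1
  have hχu : -2 ≤ deriv χ u := hχ' u
  have key1 : 0 ≤ χ u * (PR + (2 / r) * P) := mul_nonneg hχ₀ hrad'
  have key2 : -(2 * (1 / (R₂ - R₁)) * P) ≤ deriv χ u * (1 / (R₂ - R₁)) * P := by
    have h1 : (0:ℝ) ≤ 1 / (R₂ - R₁) := by positivity
    nlinarith [mul_nonneg (mul_nonneg (by linarith : (0:ℝ) ≤ deriv χ u + 2) h1) hPnn]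
  have key3 : 2 * (1 / (R₂ - R₁)) * P ≤ 2 * (1 / (R₂ - R₁)) * (a / r) := by
    have h1 : (0:ℝ) ≤ 2 * (1 / (R₂ - R₁)) := by positivity
    exact mul_le_mul_of_nonneg_left hbound' h1
  have hLHS : (2 / r) * ((H0pol r 0 pθ - χ u * P) - pθ - a / (R₂ - R₁))
      = pθ ^ 2 / r ^ 3 - (2 / r) * (χ u * P) - 2 * (1 / (R₂ - R₁)) * (a / r) := by
    simp only [H0pol]
    field_simp
    ring
  rw [hLHS]
  have hexp : χ u * (PR + (2 / r) * P) = χ u * PR + (2 / r) * (χ u * P) := by ring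
  nlinarith [key1, key2, key3]
end
end

section
/- Let H₀ = p_r²/2 + p_θ²/(2r²) + p_θ in symplectic polar coordinates on T*ℝ² and let V : ℝ² → ℝ be smooth and nonnegative with constants a, R₁ > 0 such that V(r,θ) ≤ a/r and ∂ᵣV(r,θ) + (2/r)V(r,θ) ≥ 0 for all r > R₁. Choose an energy value c > max{ (32a²)^{1/3}, (4a(3R₁ + 2(2a)^{1/3}))^{1/2} }, set R₂ := (c² + 2aR₁)/(8a), let χ : ℝ → [0,1] be smooth and nonincreasing with χ' ≥ −2, χ = 1 on (−∞,0] and χ = 0 on [1,∞), χ₀(r) := χ((r−R₁)/(R₂−R₁)), χ₁ := χ(H₀ − sup V − c), and H₁ := H₀ − χ₀χ₁V. Then there is no point x = (r,θ,p_r,p_θ) with H₁(x) = c and R₁ ≤ r ≤ R₂ at which simultaneously {H₁,r}(x) = 0 and {H₁,{H₁,r}}(x) ≤ 0; in fact at every x with H₁(x) = c, R₁ ≤ r ≤ R₂ and p_r = 0 one has {H₁,{H₁,r}}(x) = p_θ²/r³ + χ₀(r)∂ᵣV(r,θ) + χ₀'(r)V(r,θ) ≥ aR₁²/( 4r(c +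 R₂²)(R₂ − R₁) ) > 0. -/
open Real Set

noncomputable section

set_option maxHeartbeats 800000 in
private lemma noMax_aux_num (a R₁ c : ℝ) (ha : 0 < a) (hR₁ : 0 < R₁)
    (hc : c > max ((32 * a ^ 2) ^ ((1:ℝ)/3))
        (Real.sqrt (4 * a * (3 * R₁ + 2 * (2 * a) ^ ((1:ℝ)/3))))) :
    0 < c ∧ 12 * a * R₁ * c + 32 * a ^ 2 < c ^ 3 ∧ 12 * a * R₁ < c ^ 2 := by
  have hc0 : 0 < c := lt_trans (by positivity) (lt_of_le_of_lt (le_max_left _ _) hc)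
  have hcA : (32 * a ^ 2) ^ ((1:ℝ)/3) < c := lt_of_le_of_lt (le_max_left _ _) hc
  have hcB : Real.sqrt (4 * a * (3 * R₁ + 2 * (2 * a) ^ ((1:ℝ)/3))) < c :=
    lt_of_le_of_lt (le_max_right _ _) hc
  have hcube : 32 * a ^ 2 < c ^ 3 := by
    have h13 : ((32 * a ^ 2) ^ ((1:ℝ)/3)) ^ (3:ℕ) = 32 * a ^ 2 := by
      rw [← Real.rpow_natCast ((32 * a ^ 2) ^ ((1:ℝ)/3)) 3, ← Real.rpow_mul (by positivity)]
      norm_num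
    calc 32 * a ^ 2 = ((32 * a ^ 2) ^ ((1:ℝ)/3)) ^ (3:ℕ) := h13.symm
      _ < c ^ (3:ℕ) := pow_lt_pow_left₀ hcA (by positivity) (by norm_num)
      _ = c ^ 3 := rfl
  set β : ℝ := (2 * a) ^ ((1:ℝ)/3) with hβdef
  have hβ0 : 0 < β := by positivity
  have hβ3 : β ^ (3:ℕ) = 2 * a := by
    rw [hβdef, ← Real.rpow_natCast ((2 * a) ^ ((1:ℝ)/3)) 3, ← Real.rpow_mul (by positivity)]
    norm_num
  have h12 : 12 * a * R₁ + 8 * a * β < c ^ 2 := by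
    have hX : (0:ℝ) ≤ 4 * a * (3 * R₁ + 2 * β) := by positivity
    have hs := Real.sq_sqrt hX
    nlinarith [pow_lt_pow_left₀ hcB (Real.sqrt_nonneg _) (two_ne_zero), hs]
  have hβc : 4 * a ≤ β * c := by
    by_contra hcon
    push_neg at hcon
    have h1 : (β * c) ^ (3:ℕ) < (4 * a) ^ (3:ℕ) :=
      pow_lt_pow_left₀ hcon (by positivity) (by norm_num)
    have h2 : (β * c) ^ (3:ℕ) = 2 * a * c ^ 3 := by rw [mul_pow, hβ3]
    nlinarith [hcube, ha]
  refine ⟨hc0, ?_, by nlinarith [h12, ha, hβ0]⟩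
  have h1 : (12 * a * R₁ + 8 * a * β) * c < c ^ 2 * c :=
    mul_lt_mul_of_pos_right h12 hc0
  nlinarith [mul_le_mul_of_nonneg_left hβc (by positivity : (0:ℝ) ≤ 8 * a / 4)]

set_option maxHeartbeats 800000 in
private lemma noMax_aux_poly (a R₁ c R₂ : ℝ) (ha : 0 < a) (hR₁ : 0 < R₁)
    (hc0 : 0 < c) (hkey : 12 * a * R₁ * c + 32 * a ^ 2 < c ^ 3)
    (h8R₂ : 8 * a * R₂ = c ^ 2 + 2 * a * R₁) :
    8 * a * (c + R₂ ^ 2) + a * R₁ ^ 2 ≤ 4 * (c ^ 2 - 2 * a * R₂) * (R₂ - R₁) := by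
  have hR₂' : R₂ = (c ^ 2 + 2 * a * R₁) / (8 * a) := by
    field_simp at h8R₂ ⊢
    linarith
  rw [hR₂']
  rw [div_sub' (by positivity : (8:ℝ) * a ≠ 0)]
  have h1 : c ^ 2 - 2 * a * ((c ^ 2 + 2 * a * R₁) / (8 * a))
      = (3 * c ^ 2 - 2 * a * R₁) / 4 := by
    field_simp
    ring
  rw [h1, ← sub_nonneg]
  have hc3 : (0:ℝ) < c ^ 3 - 12 * a * R₁ * c - 32 * a ^ 2 := by linarith
  have expand : 4 * ((3 * c ^ 2 - 2 * a * R₁) / 4) * ((c ^ 2 + 2 * a * R₁ - 8 * a * R₁) / (8 * a))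
      - (8 * a * (c + ((c ^ 2 + 2 * a * R₁) / (8 * a)) ^ 2) + a * R₁ ^ 2)
      = c * (c ^ 3 - 12 * a * R₁ * c - 32 * a ^ 2) / (4 * a) := by
    field_simp
    ring
  rw [expand]
  exact div_nonneg (mul_nonneg hc0.le hc3.le) (by positivity)

set_option maxHeartbeats 800000 in
private lemma noMax_aux_core (a R₁ c R₂ r pθ w v dv dχ : ℝ)
    (ha : 0 < a) (hR₁ : 0 < R₁) (hc0 : 0 < c)
    (hkey : 12 * a * R₁ * c + 32 * a ^ 2 < c ^ 3) (hc2 : 12 * a * R₁ < c ^ 2)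
    (h8R₂ : 8 * a * R₂ = c ^ 2 + 2 * a * R₁) (hDpos : 0 < R₂ - R₁)
    (hr1 : R₁ ≤ r) (hr2 : r ≤ R₂)
    (hw0 : 0 ≤ w) (hw1 : w ≤ 1) (hv0 : 0 ≤ v) (hvb : v ≤ a / r)
    (hdv : -(2 / r) * v ≤ dv) (hdχ : -(2 / (R₂ - R₁)) ≤ dχ)
    (hsq : pθ ^ 2 = 2 * r ^ 2 * (c + w * v - pθ)) :
    a * R₁ ^ 2 / (4 * r * (c + R₂ ^ 2) * (R₂ - R₁)) ≤ pθ ^ 2 / r ^ 3 + w * dv + dχ * v := by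
  have hr0 : 0 < r := lt_of_lt_of_le hR₁ hr1
  have hrne : r ≠ 0 := ne_of_gt hr0
  have hR₂pos : 0 < R₂ := lt_of_lt_of_le hr0 hr2
  have hQ : 0 < c + R₂ ^ 2 := by positivity
  have h2aR₂ : 2 * a * R₂ < c ^ 2 := by nlinarith
  -- lower bounds for the three terms
  have h1' : pθ ^ 2 / r ^ 3 = 2 * (c - pθ) / r + 2 * (w * v) / r := by
    rw [hsq]; field_simp; ring
  have h2 : -(2 * (w * v) / r) ≤ w * dv := by
    have hmul := mul_le_mul_of_nonneg_left hdv hw0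
    calc -(2 * (w * v) / r) = w * (-(2 / r) * v) := by ring
      _ ≤ w * dv := hmul
  have h3 : -(2 * (a / r) / (R₂ - R₁)) ≤ dχ * v := by
    have e1 : (-(2 / (R₂ - R₁))) * v ≤ dχ * v := mul_le_mul_of_nonneg_right hdχ hv0
    have hneg : -(2 / (R₂ - R₁)) ≤ 0 := by
      rw [neg_nonpos]
      positivity
    have e2 : (-(2 / (R₂ - R₁))) * (a / r) ≤ (-(2 / (R₂ - R₁))) * v :=
      mul_le_mul_of_nonpos_left hvb hneg
    calc -(2 * (a / r) / (R₂ - R₁)) = (-(2 / (R₂ - R₁))) * (a / r) := by ring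
      _ ≤ (-(2 / (R₂ - R₁))) * v := e2
      _ ≤ dχ * v := e1
  -- key bound 2(c-pθ)(r²+c) ≥ c² - 2ar
  have hwv : w * v ≤ a / r := by nlinarith
  have har : 2 * r ^ 2 * (a / r) = 2 * a * r := by field_simp
  have hG : pθ ^ 2 + 2 * r ^ 2 * pθ ≤ 2 * r ^ 2 * c + 2 * a * r := by
    have hm : 2 * r ^ 2 * (w * v) ≤ 2 * r ^ 2 * (a / r) :=
      mul_le_mul_of_nonneg_left hwv (by positivity)
    nlinarith [hsq]
  have hstar : c ^ 2 - 2 * a * r ≤ 2 * (c - pθ) * (r ^ 2 + c) := by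
    nlinarith [hG, sq_nonneg (c - pθ)]
  have hnum : 0 < c ^ 2 - 2 * a * r := by nlinarith
  have hrc : 0 < r ^ 2 + c := by positivity
  have hcp : 0 < c - pθ := by nlinarith [mul_pos hrc hnum]
  have hs1 : (c ^ 2 - 2 * a * R₂) / (c + R₂ ^ 2) ≤ 2 * (c - pθ) := by
    rw [div_le_iff₀ hQ]
    nlinarith [hstar, mul_nonneg hcp.le (by nlinarith : (0:ℝ) ≤ R₂ ^ 2 - r ^ 2)]
  have hpoly := noMax_aux_poly a R₁ c R₂ ha hR₁ hc0 hkey h8R₂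
  have hs2 : 2 * a / (R₂ - R₁) + a * R₁ ^ 2 / (4 * (c + R₂ ^ 2) * (R₂ - R₁)) ≤
      (c ^ 2 - 2 * a * R₂) / (c + R₂ ^ 2) := by
    have hcomb : 2 * a / (R₂ - R₁) + a * R₁ ^ 2 / (4 * (c + R₂ ^ 2) * (R₂ - R₁))
        = (8 * a * (c + R₂ ^ 2) + a * R₁ ^ 2) / (4 * (c + R₂ ^ 2) * (R₂ - R₁)) := by
      field_simp
      ring
    rw [hcomb, div_le_div_iff₀ (by positivity) hQ]
    nlinarith [mul_le_mul_of_nonneg_right hpoly hQ.le]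
  have hstep : 2 * a / (R₂ - R₁) + a * R₁ ^ 2 / (4 * (c + R₂ ^ 2) * (R₂ - R₁)) ≤
      2 * (c - pθ) := le_trans hs2 hs1
  have h4 := (div_le_div_iff_of_pos_right hr0).mpr hstep
  have e1 : (2 * a / (R₂ - R₁) + a * R₁ ^ 2 / (4 * (c + R₂ ^ 2) * (R₂ - R₁))) / r
      = 2 * (a / r) / (R₂ - R₁) + a * R₁ ^ 2 / (4 * r * (c + R₂ ^ 2) * (R₂ - R₁)) := by
    field_simp
  rw [e1] at h4
  linarith [h1', h2, h3, h4]

set_option maxHeartbeats 1000000 in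
theorem noMax_lemma
    (V : ℝ × ℝ → ℝ) (a R₁ c R₂ : ℝ)
    (hV : ContDiff ℝ (⊤ : ℕ∞) V) (hVnn : ∀ q, 0 ≤ V q)
    (ha : 0 < a) (hR₁ : 0 < R₁)
    (hbound : ∀ r θ : ℝ, R₁ < r → pol V r θ ≤ a / r)
    (hrad : ∀ r θ : ℝ, R₁ < r → 0 ≤ polR V r θ + (2 / r) * pol V r θ)
    (hc : c > max ((32 * a ^ 2) ^ ((1:ℝ)/3))
        (Real.sqrt (4 * a * (3 * R₁ + 2 * (2 * a) ^ ((1:ℝ)/3)))))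
    (hR₂ : R₂ = (c ^ 2 + 2 * a * R₁) / (8 * a))
    (χ : ℝ → ℝ)
    (hχ : ContDiff ℝ (⊤ : ℕ∞) χ) (hχ01 : ∀ x, χ x ∈ Icc (0:ℝ) 1) (hχanti : Antitone χ)
    (hχ' : ∀ x, -2 ≤ deriv χ x)
    (hχleft : ∀ x : ℝ, x ≤ 0 → χ x = 1) (hχright : ∀ x : ℝ, 1 ≤ x → χ x = 0) :
    ∀ r θ pr pθ : ℝ,
      H0pol r pr pθ -
          χ ((r - R₁) / (R₂ - R₁)) * χ (H0pol r pr pθ - (⨆ q, V q) - c) * pol V r θ = c →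
        R₁ ≤ r → r ≤ R₂ → pr = 0 →
          a * R₁ ^ 2 / (4 * r * (c + R₂ ^ 2) * (R₂ - R₁)) ≤
              pθ ^ 2 / r ^ 3 + χ ((r - R₁) / (R₂ - R₁)) * polR V r θ +
                deriv (fun s => χ ((s - R₁) / (R₂ - R₁))) r * pol V r θ ∧
          0 < a * R₁ ^ 2 / (4 * r * (c + R₂ ^ 2) * (R₂ - R₁)) := by
  obtain ⟨hc0, hkey, hc2⟩ := noMax_aux_num a R₁ c ha hR₁ hc
  have h8R₂ : 8 * a * R₂ = c ^ 2 + 2 * a * R₁ := by rw [hR₂]; field_simp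
  have hDpos : 0 < R₂ - R₁ := by
    rw [hR₂, lt_sub_iff_add_lt, ← sub_pos]
    have : (c ^ 2 + 2 * a * R₁) / (8 * a) - (0 + R₁) = (c ^ 2 - 6 * a * R₁) / (8 * a) := by
      field_simp; ring
    rw [this]
    apply div_pos (by nlinarith) (by positivity)
  -- V is bounded above
  have hbddV : BddAbove (Set.range V) := by
    obtain ⟨q0, _, hq0⟩ := (isCompact_closedBall (0 : ℝ × ℝ) R₁).exists_isMaxOn
      (Metric.nonempty_closedBall.mpr hR₁.le) hV.continuous.continuousOn
    refine ⟨max (V q0) (a / R₁), ?_⟩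
    rintro x ⟨q, rfl⟩
    set z : ℂ := ⟨q.1, q.2⟩ with hzdef
    by_cases hz : ‖z‖ ≤ R₁
    · refine le_trans (hq0 ?_) (le_max_left _ _)
      rw [Metric.mem_closedBall, dist_zero_right]
      have h1 : |q.1| ≤ ‖z‖ := Complex.abs_re_le_norm z
      have h2 : |q.2| ≤ ‖z‖ := Complex.abs_im_le_norm z
      rw [Prod.norm_def]
      simp only [Real.norm_eq_abs]
      exact max_le (le_trans h1 hz) (le_trans h2 hz)
    · push_neg at hz
      have hz0 : z ≠ 0 := by
        intro h
        rw [h] at hz; simp at hz; linarith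
      have habs : ‖z‖ ≠ 0 := by simpa using hz0
      have h1 := Complex.cos_arg hz0
      have h2 := Complex.sin_arg z
      have hq : q = (‖z‖ * Real.cos (Complex.arg z),
          ‖z‖ * Real.sin (Complex.arg z)) := by
        have e1 : q.1 = ‖z‖ * Real.cos (Complex.arg z) := by
          rw [h1]; field_simp; rfl
        have e2 : q.2 = ‖z‖ * Real.sin (Complex.arg z) := by
          rw [h2]; field_simp; rfl
        exact Prod.ext e1 e2
      have hVq : V q = pol V (‖z‖) (Complex.arg z) := by rw [hq]; rfl
      rw [hVq]
      refine le_trans (hbound _ _ hz) (le_trans ?_ (le_max_right _ _))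
      exact div_le_div_of_nonneg_left ha.le hR₁ hz.le
  have hVS : ∀ q, V q ≤ ⨆ q, V q := fun q => le_ciSup hbddV q
  -- main argument
  intro r θ pr pθ heq hr1 hr2 hpr
  subst hpr
  have hr0 : 0 < r := lt_of_lt_of_le hR₁ hr1
  have hrne : r ≠ 0 := ne_of_gt hr0
  have hv0 : 0 ≤ pol V r θ := hVnn _
  have hpolC : ContDiff ℝ (⊤ : ℕ∞) (fun s : ℝ => pol V s θ) :=
    hV.comp (ContDiff.prodMk (contDiff_id.mul contDiff_const) (contDiff_id.mul contDiff_const))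
  -- radial bounds at r (closure of (R₁, ∞))
  have hvb : pol V r θ ≤ a / r := by
    rcases eq_or_lt_of_le hr1 with h | h
    · have t1 : Filter.Tendsto (fun s => pol V s θ) (nhdsWithin r (Ioi r))
          (nhds (pol V r θ)) :=
        (hpolC.continuous.tendsto r).mono_left nhdsWithin_le_nhds
      have t2 : Filter.Tendsto (fun s => a / s) (nhdsWithin r (Ioi r)) (nhds (a / r)) :=
        (ContinuousAt.div continuousAt_const continuousAt_id hrne).tendsto.mono_left
          nhdsWithin_le_nhds
      refine le_of_tendsto_of_tendsto t1 t2 ?_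
      filter_upwards [self_mem_nhdsWithin] with s hs
      exact hbound s θ (h ▸ hs)
    · exact hbound r θ h
  have hdvb : -(2 / r) * pol V r θ ≤ polR V r θ := by
    rcases eq_or_lt_of_le hr1 with h | h
    · have hcont : Continuous (fun s => polR V s θ) := hpolC.continuous_deriv (by simp)
      have ca : ContinuousAt (fun s => polR V s θ + (2 / s) * pol V s θ) r :=
        hcont.continuousAt.add
          ((ContinuousAt.div continuousAt_const continuousAt_id hrne).mul
            hpolC.continuous.continuousAt)
      have t1 : Filter.Tendsto (fun s => polR V s θ + (2 / s) * pol V s θ)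
          (nhdsWithin r (Ioi r)) (nhds (polR V r θ + (2 / r) * pol V r θ)) :=
        ca.tendsto.mono_left nhdsWithin_le_nhds
      have h0 : 0 ≤ polR V r θ + (2 / r) * pol V r θ := by
        refine ge_of_tendsto t1 ?_
        filter_upwards [self_mem_nhdsWithin] with s hs
        exact hrad s θ (h ▸ hs)
      linarith
    · linarith [hrad r θ h]
  -- the inner cutoff equals 1 on the energy surface
  obtain ⟨hw0, hw1⟩ := hχ01 ((r - R₁) / (R₂ - R₁))
  obtain ⟨ht0, ht1'⟩ := hχ01 (H0pol r 0 pθ - (⨆ q, V q) - c)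
  have hH0 : H0pol r 0 pθ = pθ ^ 2 / (2 * r ^ 2) + pθ := by simp [H0pol]
  have ht1 : χ (H0pol r 0 pθ - (⨆ q, V q) - c) = 1 := by
    apply hχleft
    have hwt : χ ((r - R₁) / (R₂ - R₁)) * χ (H0pol r 0 pθ - (⨆ q, V q) - c) * pol V r θ
        ≤ pol V r θ := by
      nlinarith [mul_nonneg (mul_nonneg hv0 ht0) (sub_nonneg.mpr hw1),
        mul_nonneg hv0 (sub_nonneg.mpr ht1')]
    have hvS : pol V r θ ≤ ⨆ q, V q := hVS (r * Real.cos θ, r * Real.sin θ)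
    linarith [heq]
  have heq' : pθ ^ 2 / (2 * r ^ 2) + pθ = c + χ ((r - R₁) / (R₂ - R₁)) * pol V r θ := by
    rw [ht1] at heq
    rw [← hH0]
    linarith
  have hsq : pθ ^ 2 = 2 * r ^ 2 * (c + χ ((r - R₁) / (R₂ - R₁)) * pol V r θ - pθ) := by
    have h2r : (2 * r ^ 2) ≠ 0 := by positivity
    field_simp at heq'
    linarith
  -- chain rule for the cutoff derivative
  have hder : deriv (fun s => χ ((s - R₁) / (R₂ - R₁))) r
      = deriv χ ((r - R₁) / (R₂ - R₁)) * (1 / (R₂ - R₁)) := by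
    have hinner : HasDerivAt (fun s : ℝ => (s - R₁) / (R₂ - R₁)) (1 / (R₂ - R₁)) r := by
      simpa using ((hasDerivAt_id r).sub_const R₁).div_const (R₂ - R₁)
    have houter : HasDerivAt χ (deriv χ ((r - R₁) / (R₂ - R₁))) ((r - R₁) / (R₂ - R₁)) :=
      ((hχ.differentiable (by simp)) _).hasDerivAt
    exact (houter.comp r hinner).deriv
  have hdχ : -(2 / (R₂ - R₁)) ≤ deriv (fun s => χ ((s - R₁) / (R₂ - R₁))) r := by
    rw [hder]
    have h1 : (-2 : ℝ) * (1 / (R₂ - R₁)) ≤ deriv χ ((r - R₁) / (R₂ - R₁)) * (1 / (R₂ - R₁)) :=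
      mul_le_mul_of_nonneg_right (hχ' _) (by positivity)
    calc -(2 / (R₂ - R₁)) = (-2 : ℝ) * (1 / (R₂ - R₁)) := by ring
      _ ≤ _ := h1
  constructor
  · exact noMax_aux_core a R₁ c R₂ r pθ (χ ((r - R₁) / (R₂ - R₁))) (pol V r θ)
      (polR V r θ) (deriv (fun s => χ ((s - R₁) / (R₂ - R₁))) r)
      ha hR₁ hc0 hkey hc2 h8R₂ hDpos hr1 hr2 hw0 hw1 hv0 hvb hdvb hdχ hsq
  · apply div_pos (by positivity)
    have hQ : 0 < c + R₂ ^ 2 := by positivity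
    exact mul_pos (mul_pos (by linarith : (0:ℝ) < 4 * r) hQ) hDpos
end
end

section
/- Fix μ ∈ (0, ½] and let V(r,θ) := (1−μ)/√(r² + 2rμ cosθ + μ²) + μ/√(r² − 2r(1−μ) cosθ + (1−μ)²). Then for all r ≥ 2(1−μ) and all θ, one has r·∂ᵣV(r,θ) + 2V(r,θ) ≥ 0; explicitly, r∂ᵣV + 2V = (1−μ)(r² + 3rμ cosθ + 2μ²)/(r² + 2rμ cosθ + μ²)^{3/2} + μ(r² − 3r(1−μ)cosθ + 2(1−μ)²)/(r² − 2r(1−μ)cosθ + (1−μ)²)^{3/2} ≥ 0. (In particular ∂ᵣV(r,θ) + (2/r)V(r,θ) ≥ 0 for r ≥ 2(1−μ).) -/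
open Real Set

noncomputable section

set_option maxHeartbeats 1600000

/-- for the three-body potential, `r∂ᵣV + 2V` equals the explicit
expression below and is nonnegative for `r ≥ 2(1−μ)`. -/
theorem threeBody_radial_inequality (μ : ℝ) (hμ : μ ∈ Ioc (0:ℝ) (1/2)) :
    ∀ r θ : ℝ, 2 * (1 - μ) ≤ r →
      r * deriv (fun s => V3 μ s θ) r + 2 * V3 μ r θ =
        (1 - μ) * (r ^ 2 + 3 * r * μ * Real.cos θ + 2 * μ ^ 2) /
            (r ^ 2 + 2 * r * μ * Real.cos θ + μ ^ 2) ^ ((3:ℝ)/2) +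
          μ * (r ^ 2 - 3 * r * (1 - μ) * Real.cos θ + 2 * (1 - μ) ^ 2) /
            (r ^ 2 - 2 * r * (1 - μ) * Real.cos θ + (1 - μ) ^ 2) ^ ((3:ℝ)/2) ∧
      0 ≤ r * deriv (fun s => V3 μ s θ) r + 2 * V3 μ r θ := by
  intro r θ hr
  obtain ⟨hμ0, hμ2⟩ := hμ
  set c := Real.cos θ with hcdef
  have hc1 : -1 ≤ c := Real.neg_one_le_cos θ
  have hc2 : c ≤ 1 := Real.cos_le_one θ
  have hr0 : (0:ℝ) < r := by linarith
  have hA : (0:ℝ) < r ^ 2 + 2 * r * μ * c + μ ^ 2 := by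
    nlinarith [mul_nonneg (mul_nonneg hr0.le hμ0.le) (by linarith : (0:ℝ) ≤ 1 + c),
      sq_nonneg (r - μ)]
  have hB : (0:ℝ) < r ^ 2 - 2 * r * (1 - μ) * c + (1 - μ) ^ 2 := by
    nlinarith [mul_nonneg (mul_nonneg hr0.le (by linarith : (0:ℝ) ≤ 1 - μ))
      (by linarith : (0:ℝ) ≤ 1 - c), sq_nonneg (r - (1 - μ))]
  set sA := Real.sqrt (r ^ 2 + 2 * r * μ * c + μ ^ 2) with hsAdef
  set sB := Real.sqrt (r ^ 2 - 2 * r * (1 - μ) * c + (1 - μ) ^ 2) with hsBdef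
  have hsA : sA ^ 2 = r ^ 2 + 2 * r * μ * c + μ ^ 2 := Real.sq_sqrt hA.le
  have hsB : sB ^ 2 = r ^ 2 - 2 * r * (1 - μ) * c + (1 - μ) ^ 2 := Real.sq_sqrt hB.le
  have hsA0 : 0 < sA := Real.sqrt_pos.mpr hA
  have hsB0 : 0 < sB := Real.sqrt_pos.mpr hB
  -- rewrite the rpow denominators
  have hApow : (r ^ 2 + 2 * r * μ * c + μ ^ 2) ^ ((3:ℝ)/2) = sA ^ 3 := by
    rw [← hsA, ← Real.rpow_natCast sA 2, ← Real.rpow_natCast sA 3,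
      ← Real.rpow_mul hsA0.le]
    norm_num
  have hBpow : (r ^ 2 - 2 * r * (1 - μ) * c + (1 - μ) ^ 2) ^ ((3:ℝ)/2) = sB ^ 3 := by
    rw [← hsB, ← Real.rpow_natCast sB 2, ← Real.rpow_natCast sB 3,
      ← Real.rpow_mul hsB0.le]
    norm_num
  -- compute the derivative
  have hA' : HasDerivAt (fun s : ℝ => s ^ 2 + 2 * s * μ * c + μ ^ 2)
      (2 * r + 2 * μ * c) r := by
    have h1 : HasDerivAt (fun s : ℝ => s ^ 2) (2 * r) r := by
      simpa using hasDerivAt_pow 2 r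
    have heq : (fun s : ℝ => s ^ 2 + 2 * s * μ * c + μ ^ 2)
        = fun s : ℝ => s ^ 2 + 2 * μ * c * s + μ ^ 2 := by funext s; ring
    rw [heq]
    simpa using ((hasDerivAt_pow 2 r).add
      ((hasDerivAt_id r).const_mul (2 * μ * c))).add_const (μ ^ 2)
  have hB' : HasDerivAt (fun s : ℝ => s ^ 2 - 2 * s * (1 - μ) * c + (1 - μ) ^ 2)
      (2 * r - 2 * (1 - μ) * c) r := by
    have h1 : HasDerivAt (fun s : ℝ => s ^ 2) (2 * r) r := by
      simpa using hasDerivAt_pow 2 r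
    have heq : (fun s : ℝ => s ^ 2 - 2 * s * (1 - μ) * c + (1 - μ) ^ 2)
        = fun s : ℝ => s ^ 2 - 2 * (1 - μ) * c * s + (1 - μ) ^ 2 := by funext s; ring
    rw [heq]
    simpa using ((hasDerivAt_pow 2 r).sub
      ((hasDerivAt_id r).const_mul (2 * (1 - μ) * c))).add_const ((1 - μ) ^ 2)
  have hsqA : HasDerivAt (fun s : ℝ => Real.sqrt (s ^ 2 + 2 * s * μ * c + μ ^ 2))
      (1 / (2 * sA) * (2 * r + 2 * μ * c)) r :=
    (Real.hasDerivAt_sqrt hA.ne').comp r hA'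
  have hsqB : HasDerivAt
      (fun s : ℝ => Real.sqrt (s ^ 2 - 2 * s * (1 - μ) * c + (1 - μ) ^ 2))
      (1 / (2 * sB) * (2 * r - 2 * (1 - μ) * c)) r :=
    (Real.hasDerivAt_sqrt hB.ne').comp r hB'
  have h1 : HasDerivAt
      (fun s : ℝ => (1 - μ) / Real.sqrt (s ^ 2 + 2 * s * μ * c + μ ^ 2))
      ((1 - μ) * (-(1 / (2 * sA) * (2 * r + 2 * μ * c)) / sA ^ 2)) r := by
    simpa [div_eq_mul_inv] using (hsqA.inv hsA0.ne').const_mul (1 - μ)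
  have h2 : HasDerivAt
      (fun s : ℝ => μ / Real.sqrt (s ^ 2 - 2 * s * (1 - μ) * c + (1 - μ) ^ 2))
      (μ * (-(1 / (2 * sB) * (2 * r - 2 * (1 - μ) * c)) / sB ^ 2)) r := by
    simpa [div_eq_mul_inv] using (hsqB.inv hsB0.ne').const_mul μ
  have hD : deriv (fun s => V3 μ s θ) r =
      (1 - μ) * (-(1 / (2 * sA) * (2 * r + 2 * μ * c)) / sA ^ 2) +
      μ * (-(1 / (2 * sB) * (2 * r - 2 * (1 - μ) * c)) / sB ^ 2) := by
    apply HasDerivAt.deriv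
    exact (h1.add h2)
  have hEq : r * deriv (fun s => V3 μ s θ) r + 2 * V3 μ r θ =
      (1 - μ) * (r ^ 2 + 3 * r * μ * c + 2 * μ ^ 2) /
          (r ^ 2 + 2 * r * μ * c + μ ^ 2) ^ ((3:ℝ)/2) +
        μ * (r ^ 2 - 3 * r * (1 - μ) * c + 2 * (1 - μ) ^ 2) /
          (r ^ 2 - 2 * r * (1 - μ) * c + (1 - μ) ^ 2) ^ ((3:ℝ)/2) := by
    have hnumA : r ^ 2 + 3 * r * μ * c + 2 * μ ^ 2
        = 2 * sA ^ 2 - (r ^ 2 + r * μ * c) := by rw [hsA]; ring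
    have hnumB : r ^ 2 - 3 * r * (1 - μ) * c + 2 * (1 - μ) ^ 2
        = 2 * sB ^ 2 - (r ^ 2 - r * (1 - μ) * c) := by rw [hsB]; ring
    rw [hD, hApow, hBpow, V3, ← hcdef, ← hsAdef, ← hsBdef, hnumA, hnumB]
    field_simp
    ring
  refine ⟨hEq, ?_⟩
  rw [hEq]
  have hnum1 : 0 ≤ r ^ 2 + 3 * r * μ * c + 2 * μ ^ 2 := by
    nlinarith [mul_nonneg (mul_nonneg hr0.le hμ0.le) (by linarith : (0:ℝ) ≤ 1 + c)]
  have hnum2 : 0 ≤ r ^ 2 - 3 * r * (1 - μ) * c + 2 * (1 - μ) ^ 2 := by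
    nlinarith [mul_nonneg (mul_nonneg hr0.le (by linarith : (0:ℝ) ≤ 1 - μ))
      (by linarith : (0:ℝ) ≤ 1 - c)]
  have hd1 : (0:ℝ) < (r ^ 2 + 2 * r * μ * c + μ ^ 2) ^ ((3:ℝ)/2) := by
    rw [hApow]; positivity
  have hd2 : (0:ℝ) < (r ^ 2 - 2 * r * (1 - μ) * c + (1 - μ) ^ 2) ^ ((3:ℝ)/2) := by
    rw [hBpow]; positivity
  exact add_nonneg (div_nonneg (mul_nonneg (by linarith : (0:ℝ) ≤ 1 - μ) hnum1) hd1.le)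
    (div_nonneg (mul_nonneg hμ0.le hnum2) hd2.le)
end
end
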